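/- arXiv:0909.3043 — 2 statements merged into one kernel-verified Lean document; each statement's English description precedes it below -/
import Mathlib

section
/- For r, r' > 0 with r ≠ r' and t ∈ [-1,1] one has the generating expansion 1/sqrt(r^2 + r'^2 - 2 r r' t) = Σ_{m≥0} (min(r,r')^m / max(r,r')^{m+1}) P_m(t), with the series converging absolutely. -/
noncomputable def legendreP (n : ℕ) (x : ℝ) : ℝ :=
  (1 / ((2:ℝ) ^ n * n.factorial)) * iteratedDeriv n (fun y : ℝ => (y ^ 2 - 1) ^ n) x

/-!
Put `w = 2tz - z²` into the binomial series `(1 - w)^(-1/2) = ∑ₖ C(2k, k)/4ᵏ wᵏ` and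
expand each `wᵏ` binomially. Collecting powers of `z` gives the power series of
`(1 - 2tz + z²)^(-1/2)` at `0`. Differentiating `(x² - 1)ᵐ` term by term in Rodrigues'
formula shows that its coefficients are the `Pₘ(t)`. For `t ∈ [-1, 1]` the quadratic
`1 - 2tz + z²` does not meet `(-∞, 0]` on the unit disc, so the function is holomorphic there.
Hence its Taylor series converges absolutely on the whole disc. The theorem is the case
`z = min r r' / max r r'`, scaled by `1 / max r r'`.
-/

open scoped NNReal ENNReal
open Finset

lemma ascPochhammer_eval_half {K : Type*} [Field K] [CharZero K] (k : ℕ) :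
    (ascPochhammer K k).eval (1 / 2) = k.factorial * (k.centralBinom / 4 ^ k) := by
  induction k with
  | zero => simp
  | succ k ih =>
    have h : ((k : K) + 1) * (k + 1).centralBinom = 2 * (2 * k + 1) * k.centralBinom := by
      exact_mod_cast Nat.succ_mul_centralBinom_succ k
    rw [ascPochhammer_succ_eval, ih, Nat.factorial_succ, pow_succ]
    push_cast
    field_simp
    linear_combination (-2 * (k.factorial : K)) * h

lemma Ring.multichoose_half {K : Type*} [Field K] [CharZero K] (k : ℕ) :
    Ring.multichoose (1 / 2 : K) k = k.centralBinom / 4 ^ k := by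
  have h := Ring.factorial_nsmul_multichoose_eq_ascPochhammer (1 / 2 : K) k
  rw [Polynomial.ascPochhammer_smeval_eq_eval, ascPochhammer_eval_half, nsmul_eq_mul] at h
  exact mul_left_cancel₀ (by exact_mod_cast k.factorial_ne_zero) h

theorem hasFPowerSeriesOnBall_one_div_sqrt_one_sub :
    HasFPowerSeriesOnBall (fun w : ℂ ↦ 1 / (1 - w) ^ (1 / 2 : ℂ))
      (.ofScalars ℂ fun k ↦ (k.centralBinom / 4 ^ k : ℂ)) 0 1 := by
  simpa only [← Ring.multichoose_eq, Ring.multichoose_half] using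
    Complex.one_div_one_sub_cpow_hasFPowerSeriesOnBall_zero (1 / 2)

section BinomialTerms

variable {R : Type*}

def binomialTerms [CommSemiring R] (c : ℕ → R) (a b : R) (p : ℕ × ℕ) : R :=
  c p.1 * p.1.choose p.2 * a ^ (p.1 - p.2) * b ^ p.2

lemma hasSum_binomialTerms_fiber [CommSemiring R] [TopologicalSpace R] (c : ℕ → R) (a b : R)
    (k : ℕ) : HasSum (fun j ↦ binomialTerms c a b (k, j)) (c k * (a + b) ^ k) := by
  have hvanish : ∀ j ∉ range (k + 1), binomialTerms c a b (k, j) = 0 := fun j hj ↦ by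
    simp [binomialTerms, Nat.choose_eq_zero_of_lt (by simpa [Nat.lt_succ_iff] using hj)]
  convert hasSum_sum_of_ne_finset_zero (L := .unconditional ℕ) hvanish using 1
  rw [add_comm, add_pow, mul_sum]
  refine sum_congr rfl fun j _ ↦ ?_
  simp only [binomialTerms]
  ring

lemma binomialTerms_mul_pow [CommSemiring R] (c : ℕ → R) (a b z : R) (p : ℕ × ℕ) :
    binomialTerms c (a * z) (b * z ^ 2) p = binomialTerms c a b p * z ^ (p.1 + p.2) := by
  obtain ⟨k, j⟩ := p
  rcases le_or_gt j k with hjk | hkj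
  · have hz : z ^ (k - j) * (z ^ 2) ^ j = z ^ (k + j) := by
      rw [← pow_mul, ← pow_add]; congr 1; omega
    simp only [binomialTerms, mul_pow, ← hz]
    ring
  · simp [binomialTerms, Nat.choose_eq_zero_of_lt hkj]

lemma sum_antidiagonal_binomialTerms_mul_pow [CommSemiring R] (c : ℕ → R) (a b z : R)
    (n : ℕ) :
    ∑ p ∈ antidiagonal n, binomialTerms c (a * z) (b * z ^ 2) p =
      (∑ p ∈ antidiagonal n, binomialTerms c a b p) * z ^ n := by
  rw [sum_mul]
  refine sum_congr rfl fun p hp ↦ ?_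
  rw [binomialTerms_mul_pow, mem_antidiagonal.mp hp]

lemma norm_binomialTerms_le [NormedCommRing R] [NormOneClass R] (c : ℕ → R) (a b : R)
    (p : ℕ × ℕ) : ‖binomialTerms c a b p‖ ≤ binomialTerms (‖c ·‖) ‖a‖ ‖b‖ p := by
  simp only [binomialTerms]
  refine (norm_mul_le _ _).trans ?_
  gcongr
  · refine (norm_mul_le _ _).trans ?_
    gcongr
    · refine (norm_mul_le _ _).trans ?_
      gcongr
      simpa using Nat.norm_cast_le (α := R) (p.1.choose p.2)
    · exact norm_pow_le _ _
  · exact norm_pow_le _ _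

lemma binomialTerms_nonneg (c : ℕ → ℝ) (hc : 0 ≤ c) {a b : ℝ} (ha : 0 ≤ a) (hb : 0 ≤ b) :
    0 ≤ binomialTerms c a b := fun p ↦
  mul_nonneg
    (mul_nonneg (mul_nonneg (hc p.1) (p.1.choose p.2).cast_nonneg) (pow_nonneg ha _))
    (pow_nonneg hb _)

theorem hasSum_binomialTerms [NormedCommRing R] [NormOneClass R] [CompleteSpace R]
    {c : ℕ → R} {a b s : R} (hs : HasSum (fun k ↦ c k * (a + b) ^ k) s)
    (habs : Summable fun k ↦ ‖c k‖ * (‖a‖ + ‖b‖) ^ k) :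
    HasSum (binomialTerms c a b) s := by
  have hnorm : Summable (binomialTerms (‖c ·‖) ‖a‖ ‖b‖) := by
    rw [summable_prod_of_nonneg
      (binomialTerms_nonneg _ (fun _ ↦ norm_nonneg _) (norm_nonneg _) (norm_nonneg _))]
    refine ⟨fun k ↦ (hasSum_binomialTerms_fiber _ _ _ k).summable, ?_⟩
    simpa only [(hasSum_binomialTerms_fiber _ _ _ _).tsum_eq] using habs
  have hT := (hnorm.of_norm_bounded (norm_binomialTerms_le c a b)).hasSum
  rwa [(hT.prod_fiberwise (hasSum_binomialTerms_fiber c a b)).unique hs] at hT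

end BinomialTerms

theorem HasSum.sum_antidiagonal {A M : Type*} [AddCommMonoid A] [HasAntidiagonal A]
    [AddCommMonoid M] [TopologicalSpace M] [ContinuousAdd M] [RegularSpace M]
    {f : A × A → M} {s : M} (h : HasSum f s) :
    HasSum (fun n ↦ ∑ p ∈ antidiagonal n, f p) s :=
  (HasAntidiagonal.sigmaAntidiagonalEquivProd.hasSum_iff.2 h).sigma
    fun n ↦ (antidiagonal n).hasSum f

theorem Polynomial.iteratedDeriv_eval {𝕜 : Type*} [NontriviallyNormedField 𝕜] (p : Polynomial 𝕜)
    (n : ℕ) : iteratedDeriv n (fun x ↦ p.eval x) = fun x ↦ (derivative^[n] p).eval x := by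
  induction n generalizing p with
  | zero => simp
  | succ n ih =>
    have hd : _root_.deriv (fun x ↦ p.eval x) = fun x ↦ p.derivative.eval x :=
      _root_.funext fun _ ↦ p.deriv
    rw [iteratedDeriv_succ', hd, ih, Function.iterate_succ_apply]

lemma Polynomial.eval_iterate_derivative_X_sq_sub_one_pow {R : Type*} [CommRing R] (m : ℕ)
    (x : R) : (derivative^[m] ((X ^ 2 - 1) ^ m)).eval x =
      ∑ i ∈ range (m + 1),
        (-1) ^ (m - i) * m.choose i * (2 * i).descFactorial m * x ^ (2 * i - m) := by
  rw [sub_eq_add_neg, add_pow, iterate_derivative_sum, eval_finsetSum]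
  refine sum_congr rfl fun i _ ↦ ?_
  rw [← pow_mul, ← C_1, ← C_neg, ← C_pow, ← C_eq_natCast, mul_assoc, ← C_mul, mul_comm,
    iterate_derivative_C_mul, iterate_derivative_X_pow_eq_C_mul]
  simp only [eval_mul, eval_C, eval_pow, eval_X]
  ring

lemma Nat.choose_mul_descFactorial_two_mul {m i : ℕ} (hi : i ≤ m) :
    m.choose i * (2 * i).descFactorial m =
      m.factorial * (i.centralBinom * i.choose (m - i)) := by
  have h := Nat.choose_mul (n := 2 * i) hi
  rw [two_mul, Nat.add_sub_cancel, ← two_mul] at h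
  rw [Nat.descFactorial_eq_factorial_mul_choose, Nat.centralBinom_eq_two_mul_choose, ← h]
  ring

theorem legendreP_eq_sum_antidiagonal (m : ℕ) (x : ℝ) :
    legendreP m x = ∑ p ∈ antidiagonal m,
      binomialTerms (fun k ↦ (k.centralBinom / 4 ^ k : ℝ)) (2 * x) (-1) p := by
  have hpoly : (fun y : ℝ ↦ (y ^ 2 - 1) ^ m) =
      fun y ↦ ((Polynomial.X ^ 2 - 1 : Polynomial ℝ) ^ m).eval y := by
    simp
  rw [legendreP, hpoly, Polynomial.iteratedDeriv_eval]
  dsimp only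
  rw [Polynomial.eval_iterate_derivative_X_sq_sub_one_pow, mul_sum,
    Nat.sum_antidiagonal_eq_sum_range_succ_mk]
  refine sum_congr rfl fun i hi ↦ ?_
  have hi : i ≤ m := Nat.lt_succ_iff.mp (mem_range.mp hi)
  simp only [binomialTerms]
  rcases lt_or_ge (2 * i) m with hlt | hle
  · rw [Nat.descFactorial_eq_zero_iff_lt.mpr hlt,
      Nat.choose_eq_zero_of_lt (show i < m - i by omega)]
    simp
  · have hnat : (m.choose i * (2 * i).descFactorial m : ℝ) =
        m.factorial * (i.centralBinom * i.choose (m - i)) := by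
      exact_mod_cast Nat.choose_mul_descFactorial_two_mul hi
    have hpow : (4 : ℝ) ^ i = 2 ^ m * 2 ^ (i - (m - i)) := by
      rw [← pow_add, show (4 : ℝ) = 2 ^ 2 by norm_num, ← pow_mul]; congr 1; omega
    rw [show 2 * i - m = i - (m - i) by omega, mul_pow, hpow]
    field_simp
    linear_combination x ^ (i - (m - i)) * hnat

theorem HasFPowerSeriesAt.hasFPowerSeriesOnBall_of_differentiableOn {E : Type*}
    [NormedAddCommGroup E] [NormedSpace ℂ E] [CompleteSpace E] {f : ℂ → E}
    {p : FormalMultilinearSeries ℂ ℂ E} {c : ℂ} {r : ℝ≥0∞} (hp : HasFPowerSeriesAt f p c)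
    (hf : DifferentiableOn ℂ f (Metric.eball c r)) (hr : 0 < r) :
    HasFPowerSeriesOnBall f p c r := by
  obtain ⟨r₀, hp₀⟩ := hp
  have hsub : ∀ R : ℝ≥0, 0 < R → (R : ℝ≥0∞) < r → HasFPowerSeriesOnBall f p c R :=
    fun R hR hRr ↦ hp₀.exchange_radius <| (hf.mono fun z hz ↦ ?_).hasFPowerSeriesOnBall hR
  · refine ⟨ENNReal.le_of_forall_pos_nnreal_lt fun R hR hRr ↦ (hsub R hR hRr).r_le, hr,
      fun {y} hy ↦ ?_⟩
    obtain ⟨R, hyR, hRr⟩ := ENNReal.lt_iff_exists_nnreal_btwn.1 (mem_eball_zero_iff.1 hy)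
    exact (hsub R (by exact_mod_cast pos_of_gt hyR) hRr).hasSum (mem_eball_zero_iff.2 hyR)
  · rw [Metric.mem_closedBall, dist_eq_norm] at hz
    rw [Metric.mem_eball, edist_eq_enorm_sub]
    exact (enorm_le_coe.mpr hz).trans_lt hRr

lemma one_sub_two_mul_add_sq_pos {t u : ℝ} (ht : t ∈ Set.Icc (-1 : ℝ) 1) (hu : |u| < 1) :
    0 < 1 - 2 * t * u + u ^ 2 := by
  have htu : t * u ≤ |u| :=
    calc t * u ≤ |t| * |u| := by rw [← abs_mul]; exact le_abs_self _
      _ ≤ |u| := mul_le_of_le_one_left (abs_nonneg u) (abs_le.mpr ht)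
  nlinarith [sq_abs u, abs_nonneg u]

lemma one_sub_two_mul_add_sq_mem_slitPlane {t : ℝ} (ht : t ∈ Set.Icc (-1 : ℝ) 1) {z : ℂ}
    (hz : ‖z‖ < 1) : 1 - 2 * t * z + z ^ 2 ∈ Complex.slitPlane := by
  have hre : (1 - 2 * t * z + z ^ 2).re = 1 - 2 * t * z.re + z.re ^ 2 - z.im ^ 2 := by
    simp [sq]; ring
  have him : (1 - 2 * t * z + z ^ 2).im = 2 * z.im * (z.re - t) := by
    simp [sq]; ring
  rw [Complex.mem_slitPlane_iff, hre, him]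
  by_contra! h
  obtain ⟨hnonpos, hzero⟩ := h
  rcases mul_eq_zero.mp hzero with h | h
  · have hpos := one_sub_two_mul_add_sq_pos ht ((Complex.abs_re_le_norm z).trans_lt hz)
    have him0 : z.im = 0 := by simpa using h
    rw [him0] at hnonpos
    linarith
  · have hnorm : z.re ^ 2 + z.im ^ 2 < 1 := by
      have := Complex.sq_norm z
      rw [Complex.normSq_apply] at this
      nlinarith [norm_nonneg z]
    obtain rfl : z.re = t := by linarith
    nlinarith

noncomputable def legendreGen (t : ℝ) (z : ℂ) : ℂ :=
  1 / (1 - 2 * t * z + z ^ 2) ^ (1 / 2 : ℂ)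

lemma differentiableOn_legendreGen {t : ℝ} (ht : t ∈ Set.Icc (-1 : ℝ) 1) :
    DifferentiableOn ℂ (legendreGen t) (Metric.eball 0 1) := by
  intro z hz
  rw [mem_eball_zero_iff, ← ofReal_norm, ENNReal.ofReal_lt_one] at hz
  have hslit := one_sub_two_mul_add_sq_mem_slitPlane ht hz
  refine DifferentiableAt.differentiableWithinAt ?_
  unfold legendreGen
  fun_prop (disch := simp_all [Complex.slitPlane_ne_zero])

theorem hasSum_legendreP_mul_pow_of_lt {t : ℝ} {z : ℂ}
    (hz : 2 * |t| * ‖z‖ + ‖z‖ ^ 2 < 1) :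
    HasSum (fun m ↦ (legendreP m t : ℂ) * z ^ m) (legendreGen t z) := by
  set a : ℂ := 2 * t * z
  set b : ℂ := -1 * z ^ 2
  have hab : ‖a‖₊ + ‖b‖₊ < 1 := by
    rw [← NNReal.coe_lt_coe]
    simpa [a, b] using hz
  have hbin := hasFPowerSeriesOnBall_one_div_sqrt_one_sub
  have hs : HasSum (fun k ↦ (k.centralBinom / 4 ^ k : ℂ) * (a + b) ^ k)
      (1 / (1 - (a + b)) ^ (1 / 2 : ℂ)) := by
    have hw : a + b ∈ Metric.eball (0 : ℂ) 1 := by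
      rw [mem_eball_zero_iff, ← ofReal_norm, ENNReal.ofReal_lt_one]
      exact (norm_add_le a b).trans_lt (by exact_mod_cast hab)
    simpa [FormalMultilinearSeries.ofScalars_apply_eq, mul_comm] using hbin.hasSum hw
  have habs : Summable fun k ↦ ‖(k.centralBinom / 4 ^ k : ℂ)‖ * (‖a‖ + ‖b‖) ^ k := by
    simpa using (FormalMultilinearSeries.ofScalars ℂ fun k ↦ (k.centralBinom / 4 ^ k : ℂ)
      ).summable_norm_mul_pow ((ENNReal.coe_lt_one_iff.mpr hab).trans_le hbin.r_le)
  have hcoeff (m : ℕ) : (legendreP m t : ℂ) = ∑ p ∈ antidiagonal m,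
      binomialTerms (fun k ↦ (k.centralBinom / 4 ^ k : ℂ)) (2 * t) (-1) p := by
    rw [legendreP_eq_sum_antidiagonal]
    push_cast [binomialTerms]
    rfl
  have hgen : legendreGen t z = 1 / (1 - (a + b)) ^ (1 / 2 : ℂ) := by
    simp only [legendreGen, a, b]
    ring_nf
  have h := (hasSum_binomialTerms hs habs).sum_antidiagonal
  simpa only [a, b, sum_antidiagonal_binomialTerms_mul_pow, ← hcoeff, ← hgen] using h

theorem hasFPowerSeriesAt_legendreGen (t : ℝ) :
    HasFPowerSeriesAt (legendreGen t) (.ofScalars ℂ fun m ↦ (legendreP m t : ℂ)) 0 := by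
  set r : ℝ := 1 / (2 * |t| + 2)
  have hr : 0 < r := by positivity
  have hsmall {z : ℂ} (hz : ‖z‖ ≤ r) : 2 * |t| * ‖z‖ + ‖z‖ ^ 2 < 1 := by
    have hr1 : r * (2 * |t| + 2) = 1 := one_div_mul_cancel (by positivity)
    nlinarith [mul_le_mul_of_nonneg_left hz (abs_nonneg t),
      mul_le_mul hz hz (norm_nonneg z) hr.le, abs_nonneg t]
  refine ⟨r.toNNReal, ?_, by simpa using hr, fun {y} hy ↦ ?_⟩
  · have hnorm : ‖(r : ℂ)‖ ≤ r := by rw [Complex.norm_real, Real.norm_eq_abs, abs_of_pos hr]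
    refine FormalMultilinearSeries.le_radius_of_tendsto _ (l := 0) ?_
    simpa [FormalMultilinearSeries.ofScalars_norm, abs_of_pos hr, hr.le] using
      (hasSum_legendreP_mul_pow_of_lt (hsmall hnorm)).summable.tendsto_atTop_zero.norm
  · rw [mem_eball_zero_iff, ← ofReal_norm] at hy
    have hy' : ‖y‖ ≤ r := ((ENNReal.ofReal_lt_ofReal_iff hr).mp hy).le
    simpa [FormalMultilinearSeries.ofScalars_apply_eq, mul_comm] using
      hasSum_legendreP_mul_pow_of_lt (hsmall hy')

theorem hasFPowerSeriesOnBall_legendreGen {t : ℝ} (ht : t ∈ Set.Icc (-1 : ℝ) 1) :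
    HasFPowerSeriesOnBall (legendreGen t) (.ofScalars ℂ fun m ↦ (legendreP m t : ℂ)) 0 1 :=
  (hasFPowerSeriesAt_legendreGen t).hasFPowerSeriesOnBall_of_differentiableOn
    (differentiableOn_legendreGen ht) one_pos

lemma legendreGen_ofReal {t u : ℝ} (h : 0 ≤ 1 - 2 * t * u + u ^ 2) :
    legendreGen t u = ((1 / √(1 - 2 * t * u + u ^ 2) : ℝ) : ℂ) := by
  rw [legendreGen, Real.sqrt_eq_rpow, Complex.ofReal_div, Complex.ofReal_one,
    Complex.ofReal_cpow h]
  push_cast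
  rfl

theorem summable_abs_and_hasSum_legendreP_mul_pow {t u : ℝ} (ht : t ∈ Set.Icc (-1 : ℝ) 1)
    (hu : |u| < 1) :
    Summable (fun m ↦ |legendreP m t * u ^ m|) ∧
      HasSum (fun m ↦ legendreP m t * u ^ m) (1 / √(1 - 2 * t * u + u ^ 2)) := by
  have h := hasFPowerSeriesOnBall_legendreGen ht
  have hu' : ‖(u : ℂ)‖ₑ < 1 := by
    rw [← ofReal_norm, ENNReal.ofReal_lt_one]
    simpa using hu
  constructor
  · simpa [FormalMultilinearSeries.ofScalars_norm, abs_mul] using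
      (FormalMultilinearSeries.ofScalars ℂ fun m ↦ (legendreP m t : ℂ)).summable_norm_mul_pow
        (hu'.trans_le h.r_le)
  · have hsum := h.hasSum (mem_eball_zero_iff.2 hu')
    rw [zero_add, legendreGen_ofReal (one_sub_two_mul_add_sq_pos ht hu).le] at hsum
    rw [← Complex.hasSum_ofReal]
    simpa [FormalMultilinearSeries.ofScalars_apply_eq, mul_comm] using hsum

lemma sq_add_sq_sub_eq_max_sq_mul (r r' t : ℝ) (hmax : max r r' ≠ 0) :
    r ^ 2 + r' ^ 2 - 2 * r * r' * t = max r r' ^ 2 *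
      (1 - 2 * t * (min r r' / max r r') + (min r r' / max r r') ^ 2) := by
  have hexpand :
      max r r' ^ 2 * (1 - 2 * t * (min r r' / max r r') + (min r r' / max r r') ^ 2) =
        max r r' ^ 2 - 2 * t * (min r r' * max r r') + min r r' ^ 2 := by
    field_simp
  rw [hexpand, min_mul_max]
  linear_combination
    (-(min r r' + max r r' + r + r')) * min_add_max r r' + 2 * min_mul_max r r'

theorem legendre_generating_expansion (r r' : ℝ) (hr : 0 < r) (hr' : 0 < r')
    (hne : r ≠ r') (t : ℝ) (ht : t ∈ Set.Icc (-1:ℝ) 1) :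
    Summable (fun m : ℕ => |min r r' ^ m / max r r' ^ (m + 1) * legendreP m t|) ∧
    HasSum (fun m : ℕ => min r r' ^ m / max r r' ^ (m + 1) * legendreP m t)
      (1 / Real.sqrt (r ^ 2 + r' ^ 2 - 2 * r * r' * t)) := by
  set u := min r r' / max r r'
  have hmax : 0 < max r r' := lt_max_of_lt_left hr
  have hu : |u| < 1 := by
    rw [abs_of_pos (div_pos (lt_min hr hr') hmax), div_lt_one hmax]
    exact min_lt_max.mpr hne
  have hterm (m : ℕ) : min r r' ^ m / max r r' ^ (m + 1) * legendreP m t =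
      legendreP m t * u ^ m * (max r r')⁻¹ := by
    simp only [u, div_pow, pow_succ]
    field_simp
  have hval : 1 / √(r ^ 2 + r' ^ 2 - 2 * r * r' * t) =
      1 / √(1 - 2 * t * u + u ^ 2) * (max r r')⁻¹ := by
    rw [sq_add_sq_sub_eq_max_sq_mul r r' t hmax.ne', Real.sqrt_mul (sq_nonneg _),
      Real.sqrt_sq hmax.le]
    ring
  obtain ⟨habs, hsum⟩ := summable_abs_and_hasSum_legendreP_mul_pow ht hu
  simp only [hterm, hval]
  exact ⟨by simpa only [abs_mul] using habs.mul_right |(max r r')⁻¹|, hsum.mul_right _⟩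
end

section
/- For every integer n ≥ 0 and x ∈ (-1,1), one has (1 + x) |P_n'(x)| ≤ n(n+1). -/
open Polynomial Nat Set

namespace Polynomial

variable {R : Type*} [CommRing R]

theorem iterate_derivative_derivative_two_mul_X_sq_sub_one (p : R[X]) (n : ℕ) :
    derivative^[n] (derivative^[2] p * (X ^ 2 - 1 : R[X])) =
      derivative^[n + 2] p * (X ^ 2 - 1) + (2 * n : R[X]) * X * derivative^[n + 1] p
        + (n * (n - 1) : R[X]) * derivative^[n] p := by
  induction n with
  | zero => simp
  | succ n ih =>
    rw [Function.iterate_succ_apply', ih]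
    simp only [Function.iterate_succ_apply', derivative_add, derivative_mul, derivative_sub,
      derivative_X_sq, derivative_X, derivative_one, derivative_ofNat, derivative_natCast,
      map_ofNat]
    push_cast
    ring

theorem derivative_X_sq_sub_one_pow_mul (n : ℕ) :
    derivative ((X ^ 2 - 1 : R[X]) ^ n) * (X ^ 2 - 1) = (2 * n : R[X]) * X * (X ^ 2 - 1) ^ n := by
  cases n with
  | zero => simp
  | succ n =>
    rw [derivative_pow_succ]
    simp only [derivative_sub, derivative_X_sq, derivative_one, map_add, map_natCast, map_one,
      map_ofNat]
    push_cast
    ring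

/-- `2ⁿ n!` times the `n`-th Legendre polynomial (Rodrigues' formula). -/
noncomputable def rodrigues (R : Type*) [CommRing R] (n : ℕ) : R[X] :=
  derivative^[n] ((X ^ 2 - 1) ^ n)

theorem derivative_X_sq_sub_one_mul_derivative_rodrigues (n : ℕ) :
    derivative ((X ^ 2 - 1 : R[X]) * derivative (rodrigues R n)) =
      (n * (n + 1) : R[X]) * rodrigues R n := by
  have h2 : derivative^[2] ((X ^ 2 - 1 : R[X]) ^ n) * (X ^ 2 - 1) =
      (2 * (n - 1) : R) • (derivative ((X ^ 2 - 1) ^ n) * X) + (2 * n : R) • (X ^ 2 - 1) ^ n := by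
    have h := congrArg derivative (derivative_X_sq_sub_one_pow_mul (R := R) n)
    simp only [derivative_mul, derivative_sub, derivative_X_sq, derivative_one,
      derivative_ofNat, derivative_natCast, derivative_X, map_ofNat] at h
    simp only [Function.iterate_succ_apply', Function.iterate_zero_apply, smul_eq_C_mul, map_mul,
      map_sub, map_ofNat, map_natCast, map_one]
    linear_combination h
  have hn := congrArg (derivative^[n]) h2
  simp only [iterate_derivative_derivative_two_mul_X_sq_sub_one, iterate_map_add,
    iterate_derivative_smul, iterate_derivative_derivative_mul_X] at hn
  simp only [Function.iterate_succ_apply', smul_eq_C_mul, map_mul, map_sub, map_ofNat,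
    map_natCast, map_one] at hn
  simp only [rodrigues, derivative_mul, derivative_sub, derivative_X_sq, derivative_one, map_ofNat]
  linear_combination hn

theorem eval_rodrigues_of_factor {r : R} {q : R[X]} (n : ℕ)
    (h : (X ^ 2 - 1 : R[X]) = (X - C r) * q) : eval r (rodrigues R n) = n ! * eval r q ^ n := by
  have := aeval_iterate_derivative_self ((X ^ 2 - 1 : R[X]) ^ n) n r (p' := q ^ n)
    (by rw [Algebra.algebraMap_self, map_id, h, mul_pow])
  rwa [coe_aeval_eq_eval, eval_pow, nsmul_eq_mul] at this

theorem eval_one_rodrigues (n : ℕ) : eval 1 (rodrigues R n) = n ! * 2 ^ n := by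
  rw [eval_rodrigues_of_factor n (q := X + 1)]
  · norm_num [one_add_one_eq_two]
  · simp only [map_one]; ring

theorem eval_neg_one_rodrigues (n : ℕ) : eval (-1) (rodrigues R n) = n ! * (-2) ^ n := by
  rw [eval_rodrigues_of_factor n (q := X - 1)]
  · norm_num
  · simp only [map_neg, map_one]; ring

theorem iteratedDeriv_eval_s11 {𝕜 : Type*} [NontriviallyNormedField 𝕜] (p : 𝕜[X]) (k : ℕ) :
    iteratedDeriv k (fun x => eval x p) = fun x => eval x (derivative^[k] p) := by
  induction k with
  | zero => simp
  | succ k ih =>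
    ext x
    rw [iteratedDeriv_succ, ih, Polynomial.deriv, Function.iterate_succ_apply']

end Polynomial

noncomputable def legendrePoly (n : ℕ) : ℝ[X] :=
  C (2 ^ n * n ! : ℝ)⁻¹ * rodrigues ℝ n

theorem legendreP_eq_eval (n : ℕ) : legendreP n = fun x => eval x (legendrePoly n) := by
  ext x
  have h := congrFun (iteratedDeriv_eval_s11 ((X ^ 2 - 1 : ℝ[X]) ^ n) n) x
  simp only [eval_pow, eval_sub, eval_X, eval_one] at h
  rw [legendreP, h, legendrePoly, eval_mul, eval_C, rodrigues, one_div]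

theorem derivative_one_sub_X_sq_mul_derivative_legendrePoly (n : ℕ) :
    derivative ((1 - X ^ 2) * derivative (legendrePoly n)) =
      -C (n * (n + 1) : ℝ) * legendrePoly n := by
  have h := derivative_X_sq_sub_one_mul_derivative_rodrigues (R := ℝ) n
  simp only [legendrePoly, derivative_mul, derivative_C, zero_mul, zero_add, derivative_sub,
    derivative_one, derivative_X_sq] at h ⊢
  simp only [map_mul, map_add, map_natCast, map_one]
  linear_combination (-C (2 ^ n * n ! : ℝ)⁻¹) * h

theorem eval_one_legendrePoly (n : ℕ) : eval 1 (legendrePoly n) = 1 := by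
  rw [legendrePoly, eval_mul, eval_C, eval_one_rodrigues]
  field_simp

theorem eval_neg_one_legendrePoly (n : ℕ) : eval (-1) (legendrePoly n) = (-1) ^ n := by
  rw [legendrePoly, eval_mul, eval_C, eval_neg_one_rodrigues, neg_pow 2]
  field_simp

section LegendreEquation

variable {p : ℝ[X]} {N : ℝ}

theorem derivative_energy_of_legendre_equation
    (hp : derivative ((1 - X ^ 2) * derivative p) = -C N * p) :
    derivative (C N * p ^ 2 + (1 - X ^ 2) * derivative p ^ 2) = 2 * X * derivative p ^ 2 := by
  simp only [derivative_mul, derivative_sub, derivative_one, derivative_C, derivative_sq,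
    derivative_add, derivative_X, map_ofNat] at hp ⊢
  linear_combination 2 * derivative p * hp

theorem sq_eval_le_max_of_legendre_equation (hN : 0 < N)
    (hp : derivative ((1 - X ^ 2) * derivative p) = -C N * p) {t : ℝ} (ht : t ∈ Icc (-1) 1) :
    eval t p ^ 2 ≤ max (eval (-1) p ^ 2) (eval 1 p ^ 2) := by
  set F := C N * p ^ 2 + (1 - X ^ 2) * derivative p ^ 2 with hFdef
  have hF : ∀ s, eval s F = N * eval s p ^ 2 + (1 - s ^ 2) * eval s (derivative p) ^ 2 := by
    intro s; simp [F]
  have hF' : ∀ s, deriv (fun s => eval s F) s = 2 * s * eval s (derivative p) ^ 2 := by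
    intro s; rw [Polynomial.deriv, hFdef, derivative_energy_of_legendre_equation hp]; simp
  have hmono : MonotoneOn (fun s => eval s F) (Icc 0 1) :=
    monotoneOn_of_deriv_nonneg (convex_Icc 0 1) F.continuousOn F.differentiable.differentiableOn
      fun s hs => by
        rw [interior_Icc] at hs; rw [hF']
        exact mul_nonneg (by linarith [hs.1]) (sq_nonneg _)
  have hanti : AntitoneOn (fun s => eval s F) (Icc (-1) 0) :=
    antitoneOn_of_deriv_nonpos (convex_Icc (-1) 0) F.continuousOn
      F.differentiable.differentiableOn fun s hs => by
        rw [interior_Icc] at hs; rw [hF']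
        exact mul_nonpos_of_nonpos_of_nonneg (by linarith [hs.2]) (sq_nonneg _)
  have hFt : eval t F ≤ max (eval (-1) F) (eval 1 F) := by
    rcases le_total t 0 with h | h
    · exact le_max_of_le_left (hanti ⟨le_rfl, by norm_num⟩ ⟨ht.1, h⟩ ht.1)
    · exact le_max_of_le_right (hmono ⟨h, ht.2⟩ ⟨zero_le_one, le_rfl⟩ ht.2)
  have hsq : 0 ≤ (1 - t ^ 2) * eval t (derivative p) ^ 2 := by
    have : t ^ 2 ≤ 1 := by nlinarith [ht.1, ht.2]
    nlinarith [sq_nonneg (eval t (derivative p))]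
  simp only [hF, one_pow, neg_one_sq, sub_self, zero_mul, add_zero,
    ← mul_max_of_nonneg _ _ hN.le] at hFt
  exact le_of_mul_le_mul_left (by linarith) hN

theorem one_add_mul_abs_eval_derivative_le (hN : 0 ≤ N)
    (hp : derivative ((1 - X ^ 2) * derivative p) = -C N * p) {x : ℝ} (hx : x ∈ Ioo (-1) 1)
    (hbound : ∀ t ∈ Icc x 1, |eval t p| ≤ 1) :
    (1 + x) * |eval x (derivative p)| ≤ N := by
  set G := (1 - X ^ 2) * derivative p with hGdef
  have hmvt : ‖eval 1 G - eval x G‖ ≤ N * (1 - x) :=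
    norm_image_sub_le_of_norm_deriv_le_segment' (f' := fun t => eval t (derivative G))
      (fun t _ => (G.hasDerivAt t).hasDerivWithinAt)
      (fun t ht => by
        rw [hp, eval_mul, eval_neg, eval_C, norm_mul, norm_neg, Real.norm_of_nonneg hN]
        exact mul_le_of_le_one_right hN (hbound t (Ico_subset_Icc_self ht)))
      1 ⟨hx.2.le, le_rfl⟩
  have h1x : 0 < 1 - x := by linarith [hx.2]
  have hGx : ‖eval 1 G - eval x G‖ = (1 - x) * ((1 + x) * |eval x (derivative p)|) := by
    simp only [hGdef, eval_mul, eval_sub, eval_one, eval_pow, eval_X, one_pow, sub_self, zero_mul,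
      zero_sub, norm_neg, Real.norm_eq_abs, abs_mul]
    rw [abs_of_pos (by nlinarith [hx.1, hx.2] : (0 : ℝ) < 1 - x ^ 2)]
    ring
  rw [hGx, mul_comm N] at hmvt
  exact le_of_mul_le_mul_left hmvt h1x

end LegendreEquation

theorem abs_eval_legendrePoly_le_one (n : ℕ) {t : ℝ} (ht : t ∈ Icc (-1) 1) :
    |eval t (legendrePoly n)| ≤ 1 := by
  rcases n.eq_zero_or_pos with rfl | hn
  · simp [legendrePoly, rodrigues]
  have h := sq_eval_le_max_of_legendre_equation (by positivity)
    (derivative_one_sub_X_sq_mul_derivative_legendrePoly n) ht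
  rw [eval_one_legendrePoly, eval_neg_one_legendrePoly, ← pow_mul, mul_comm, pow_mul] at h
  simpa using h

theorem legendre_deriv_bound (n : ℕ) (x : ℝ) (hx : x ∈ Set.Ioo (-1:ℝ) 1) :
    (1 + x) * |deriv (legendreP n) x| ≤ (n : ℝ) * (n + 1) := by
  rw [legendreP_eq_eval, Polynomial.deriv]
  exact one_add_mul_abs_eval_derivative_le (by positivity)
    (derivative_one_sub_X_sq_mul_derivative_legendrePoly n) hx
    fun t ht => abs_eval_legendrePoly_le_one n ⟨by linarith [hx.1, ht.1], ht.2⟩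
end
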